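/- arXiv:1401.0602 — 6 statements merged into one kernel-verified Lean document; each statement's English description precedes it below -/
import Mathlib

section
/- Let m = 2n+1 be an odd positive integer, f : Q → Q a function, b, c nonzero rationals, and u, v, w rationals with all denominators nonzero. Define p, q, T as in the proof of Theorem 2.1, and set D = f(u)·T^(m−1). Then the point P2 = (v^(−2)·f(u)·T^(m−2), f(u)^n·p·T^(n(m−1))) satisfies y^2 = x^m + b·D^(m−1), and the point P3 = (f(u)·T^(m−2), f(u)^n·q·T^(n(m−1))) satisfies y^2 = x^m + c·D^(m−1). -/
/-!
With `m = 2n + 1`, a point `(l·a·T^(m-2), a^n·y·T^(n(m-1)))` lies on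
`Y² = X^m + k·(a·T^(m-1))^(m-1)` as soon as `T·(y² - k) = l^m·a`, since the two sides differ by
`a^(m-1)·T^((m-1)² - 1)·(T(y² - k) - l^m·a)`. For the two points, with
`r = v^m`, both `p² - b` and `q² - c` equal the denominator `E` of `T` divided by a square, so
`T·(p² - b) = f(u)/r²` and `T·(q² - c) = f(u)`.
-/

theorem sq_eq_pow_add_of_mul_sub_eq {K : Type*} [Field K] {n m : ℕ} (hm : m = 2 * n + 1)
    {a k l y T : K} (hT : T ≠ 0) (h : T * (y ^ 2 - k) = l ^ m * a) :
    (a ^ n * y * T ^ (n * (m - 1))) ^ 2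
      = (l * a * T ^ ((m : ℤ) - 2)) ^ m + k * (a * T ^ (m - 1)) ^ (m - 1) := by
  subst hm
  set x := l * a * T ^ (((2 * n + 1 : ℕ) : ℤ) - 2)
  have hx : x * T = l * a * T ^ (2 * n) := by
    rw [mul_assoc, ← zpow_add_one₀ hT, ← zpow_natCast]
    push_cast; ring_nf
  simp only [Nat.add_sub_cancel]
  refine mul_right_cancel₀ (pow_ne_zero (2 * n + 1) hT) ?_
  rw [add_mul, ← mul_pow, hx]
  linear_combination a ^ (2 * n) * T ^ (4 * n ^ 2 + 2 * n) * h

section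

variable {K : Type*} [Field K] [NeZero (2 : K)] {b c w r : K}

/-- `((b + w²)r² - c)² - 4bw²r⁴ = ((b - w²)r² - c)² - 4cw²r²`. -/
def twistDenom (b c w r : K) : K :=
  r ^ 4 * w ^ 4 - 2 * r ^ 2 * (b * r ^ 2 + c) * w ^ 2 + (b * r ^ 2 - c) ^ 2

theorem sq_sub_eq_twistDenom_left (hw : w ≠ 0) (hr : r ≠ 0) :
    (((b + w ^ 2) * r ^ 2 - c) / (2 * w * r ^ 2)) ^ 2 - b
      = twistDenom b c w r / (4 * w ^ 2 * r ^ 4) := by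
  rw [div_pow, div_sub' (by simp [hw, hr, two_ne_zero]), twistDenom]
  congr 1 <;> ring

theorem sq_sub_eq_twistDenom_right (hw : w ≠ 0) (hr : r ≠ 0) :
    (((b - w ^ 2) * r ^ 2 - c) / (2 * w * r)) ^ 2 - c
      = twistDenom b c w r / (4 * w ^ 2 * r ^ 2) := by
  rw [div_pow, div_sub' (by simp [hw, hr, two_ne_zero]), twistDenom]
  congr 1 <;> ring

end

theorem stmt2_general (f : ℚ → ℚ) (n m : ℕ) (hm : m = 2 * n + 1) (b c u v w : ℚ)
    (hv : v ≠ 0) (hw : w ≠ 0)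
    (p q T D : ℚ)
    (hp : p = ((b + w ^ 2) * v ^ (2 * m) - c) / (2 * w * v ^ (2 * m)))
    (hq : q = ((b - w ^ 2) * v ^ (2 * m) - c) / (2 * w * v ^ m))
    (hden : v ^ (4 * m) * w ^ 4 - 2 * v ^ (2 * m) * (b * v ^ (2 * m) + c) * w ^ 2
      + (b * v ^ (2 * m) - c) ^ 2 ≠ 0)
    (hT : T = 4 * w ^ 2 * v ^ (2 * m) * f u /
      (v ^ (4 * m) * w ^ 4 - 2 * v ^ (2 * m) * (b * v ^ (2 * m) + c) * w ^ 2
        + (b * v ^ (2 * m) - c) ^ 2))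
    (hT0 : T ≠ 0)
    (hD : D = f u * T ^ (m - 1)) :
    ((f u) ^ n * p * T ^ (n * (m - 1))) ^ 2
      = (v ^ (-2 : ℤ) * f u * T ^ ((m : ℤ) - 2)) ^ m + b * D ^ (m - 1) ∧
    ((f u) ^ n * q * T ^ (n * (m - 1))) ^ 2
      = (f u * T ^ ((m : ℤ) - 2)) ^ m + c * D ^ (m - 1) := by
  have hr : v ^ m ≠ 0 := pow_ne_zero m hv
  have hv2 : (v ^ (-2 : ℤ)) ^ m = ((v ^ m) ^ 2)⁻¹ := by
    rw [zpow_neg, inv_pow, ← pow_mul', zpow_ofNat, ← pow_mul]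
  simp only [pow_mul' v 2 m, pow_mul' v 4 m] at hp hq hT hden
  rw [← twistDenom] at hT hden
  subst hD
  constructor
  · have hp_sub : T * (p ^ 2 - b) = (v ^ (-2 : ℤ)) ^ m * f u := by
      rw [hp, sq_sub_eq_twistDenom_left hw hr, hT, hv2]
      field_simp
    exact sq_eq_pow_add_of_mul_sub_eq hm hT0 hp_sub
  · have hq_sub : T * (q ^ 2 - c) = 1 ^ m * f u := by
      rw [hq, sq_sub_eq_twistDenom_right hw hr, hT, one_pow]
      field_simp
    simpa only [one_mul] using sq_eq_pow_add_of_mul_sub_eq hm hT0 hq_sub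

theorem stmt2 (f : ℚ → ℚ) (n m : ℕ) (hm : m = 2 * n + 1) (b c u v w : ℚ)
    (hb : b ≠ 0) (hc : c ≠ 0) (hv : v ≠ 0) (hw : w ≠ 0) (hfu : f u ≠ 0)
    (p q T D : ℚ)
    (hp : p = ((b + w ^ 2) * v ^ (2 * m) - c) / (2 * w * v ^ (2 * m)))
    (hq : q = ((b - w ^ 2) * v ^ (2 * m) - c) / (2 * w * v ^ m))
    (hden : v ^ (4 * m) * w ^ 4 - 2 * v ^ (2 * m) * (b * v ^ (2 * m) + c) * w ^ 2
      + (b * v ^ (2 * m) - c) ^ 2 ≠ 0)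
    (hT : T = 4 * w ^ 2 * v ^ (2 * m) * f u /
      (v ^ (4 * m) * w ^ 4 - 2 * v ^ (2 * m) * (b * v ^ (2 * m) + c) * w ^ 2
        + (b * v ^ (2 * m) - c) ^ 2))
    (hT0 : T ≠ 0)
    (hD : D = f u * T ^ (m - 1)) :
    ((f u) ^ n * p * T ^ (n * (m - 1))) ^ 2
      = (v ^ (-2 : ℤ) * f u * T ^ ((m : ℤ) - 2)) ^ m + b * D ^ (m - 1) ∧
    ((f u) ^ n * q * T ^ (n * (m - 1))) ^ 2
      = (f u * T ^ ((m : ℤ) - 2)) ^ m + c * D ^ (m - 1) :=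
  stmt2_general f n m hm b c u v w hv hw p q T D hp hq hden hT hT0 hD
end

section
/- Let m = 2n+1 be an odd positive integer, f : Q → Q a function, b, c nonzero rationals, and u, v, w rationals with v, w and all displayed denominators nonzero. Define p = (v^(2m)w^2 − f(u)(c − bv^(2m)))/(2v^(2m)w), q = (−v^(2m)w^2 − f(u)(c − bv^(2m)))/(2v^m·w), T = (v^(4m)w^4 − 2f(u)v^(2m)(c + bv^(2m))w^2 + f(u)^2(c − bv^(2m))^2)/(4v^(4m)w^2), and D = f(u)·T^(m−1). Then: (i) T = p^2 − b·f(u); (ii) the point (T, p·T^n) satisfies y^2 = x^m + b·D; (iii) the point (v^2·T, q·T^n) satisfies y^2 = x^m + c·D; (iv) the point (u, 1/T^n) satisfies D·y^2 = f(x). -/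
/-! Writing `x = vᵐ`, the identities `T = p² - b f(u)` and `q² = x² T + c f(u)` hold identically
in `x, w, f(u)`. Multiplying either by `T²ⁿ = Tᵐ⁻¹` puts `(T, p Tⁿ)` and `(v² T, q Tⁿ)` on the
twists by `D`, and `D / T²ⁿ = f(u)` is the statement for the twist of `y² = f(x)`. -/

section ParametrizedPoint

variable {F : Type*} [Field F] {a b c x w : F}

theorem param_sq_sub_mul_eq (h2 : (2 : F) ≠ 0) (hx : x ≠ 0) (hw : w ≠ 0) :
    ((x ^ 2 * w ^ 2 - a * (c - b * x ^ 2)) / (2 * x ^ 2 * w)) ^ 2 - b * a =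
      (x ^ 4 * w ^ 4 - 2 * a * x ^ 2 * (c + b * x ^ 2) * w ^ 2 + a ^ 2 * (c - b * x ^ 2) ^ 2) /
        (4 * x ^ 4 * w ^ 2) := by
  have h4 : (4 : F) ≠ 0 := by rw [show (4 : F) = 2 * 2 by norm_num]; exact mul_ne_zero h2 h2
  field_simp
  ring

theorem param_sq_eq_mul_add (h2 : (2 : F) ≠ 0) (hx : x ≠ 0) (hw : w ≠ 0) :
    ((-(x ^ 2) * w ^ 2 - a * (c - b * x ^ 2)) / (2 * x * w)) ^ 2 =
      x ^ 2 * ((x ^ 4 * w ^ 4 - 2 * a * x ^ 2 * (c + b * x ^ 2) * w ^ 2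
        + a ^ 2 * (c - b * x ^ 2) ^ 2) / (4 * x ^ 4 * w ^ 2)) + c * a := by
  have h4 : (4 : F) ≠ 0 := by rw [show (4 : F) = 2 * 2 by norm_num]; exact mul_ne_zero h2 h2
  field_simp
  ring

end ParametrizedPoint

theorem sq_mul_pow_eq_pow_add {R : Type*} [CommRing R] {q s t a c : R} (n : ℕ)
    (h : q ^ 2 = s ^ (2 * n + 1) * t + c * a) :
    (q * t ^ n) ^ 2 = (s * t) ^ (2 * n + 1) + c * (a * t ^ (2 * n)) := by
  rw [mul_pow, ← pow_mul, h]
  ring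

theorem stmt4_general (n m : ℕ) (hm : m = 2 * n + 1) (f : ℚ → ℚ) (b c u v w : ℚ)
    (hv : v ≠ 0) (hw : w ≠ 0)
    (p q T D : ℚ)
    (hp : p = (v ^ (2 * m) * w ^ 2 - f u * (c - b * v ^ (2 * m))) / (2 * v ^ (2 * m) * w))
    (hq : q = (-(v ^ (2 * m)) * w ^ 2 - f u * (c - b * v ^ (2 * m))) / (2 * v ^ m * w))
    (hT : T = (v ^ (4 * m) * w ^ 4 - 2 * f u * v ^ (2 * m) * (c + b * v ^ (2 * m)) * w ^ 2
      + (f u) ^ 2 * (c - b * v ^ (2 * m)) ^ 2) / (4 * v ^ (4 * m) * w ^ 2))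
    (hT0 : T ≠ 0)
    (hD : D = f u * T ^ (m - 1)) :
    T = p ^ 2 - b * f u ∧
    (p * T ^ n) ^ 2 = T ^ m + b * D ∧
    (q * T ^ n) ^ 2 = (v ^ 2 * T) ^ m + c * D ∧
    D * (1 / T ^ n) ^ 2 = f u := by
  subst hm
  simp only [pow_mul'] at hp hq hT
  have hD' : D = f u * T ^ (2 * n) := hD
  have hvm : v ^ (2 * n + 1) ≠ 0 := pow_ne_zero _ hv
  have hTp : T = p ^ 2 - b * f u := by
    rw [hp, hT, param_sq_sub_mul_eq two_ne_zero hvm hw]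
  have hTq : q ^ 2 = (v ^ 2) ^ (2 * n + 1) * T + c * f u := by
    rw [pow_right_comm, hq, hT, param_sq_eq_mul_add two_ne_zero hvm hw]
  refine ⟨hTp, ?_, ?_, ?_⟩
  · have hTp' : p ^ 2 = (1 : ℚ) ^ (2 * n + 1) * T + b * f u := by rw [hTp]; ring
    simpa [hD'] using sq_mul_pow_eq_pow_add n hTp'
  · rw [hD']
    exact sq_mul_pow_eq_pow_add n hTq
  · rw [hD']
    field_simp
    ring

theorem stmt4 (n m : ℕ) (hm : m = 2 * n + 1) (f : ℚ → ℚ) (b c u v w : ℚ)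
    (hb : b ≠ 0) (hc : c ≠ 0) (hv : v ≠ 0) (hw : w ≠ 0) (hfu : f u ≠ 0)
    (p q T D : ℚ)
    (hp : p = (v ^ (2 * m) * w ^ 2 - f u * (c - b * v ^ (2 * m))) / (2 * v ^ (2 * m) * w))
    (hq : q = (-(v ^ (2 * m)) * w ^ 2 - f u * (c - b * v ^ (2 * m))) / (2 * v ^ m * w))
    (hT : T = (v ^ (4 * m) * w ^ 4 - 2 * f u * v ^ (2 * m) * (c + b * v ^ (2 * m)) * w ^ 2
      + (f u) ^ 2 * (c - b * v ^ (2 * m)) ^ 2) / (4 * v ^ (4 * m) * w ^ 2))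
    (hT0 : T ≠ 0)
    (hD : D = f u * T ^ (m - 1)) :
    T = p ^ 2 - b * f u ∧
    (p * T ^ n) ^ 2 = T ^ m + b * D ∧
    (q * T ^ n) ^ 2 = (v ^ 2 * T) ^ m + c * D ∧
    D * (1 / T ^ n) ^ 2 = f u :=
  stmt4_general n m hm f b c u v w hv hw p q T D hp hq hT hT0 hD
end

section
/- Let p, m be positive integers and a, b nonzero rationals. Let u, v, w, t be rationals such that u^(m+1)·t^p − v^p·w^(m+1) ≠ 0 and v, t ≠ 0. Define T = (b·v^p·w^m − a·u^m·t^p)/(u^(m+1)·t^p − v^p·w^(m+1)), and set x1 = uT, y1 = vT, x2 = wT, y2 = tT. Then x1^m·(x1 + a)/y1^p = x2^m·(x2 + b)/y2^p (assuming T ≠ 0). -/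
/-! Clearing denominators, the equation becomes
`T^(m+p) (u^m (uT + a) t^p - w^m (wT + b) v^p) = 0`, and the bracket is linear in `T`:
`T (u^(m+1) t^p - v^p w^(m+1)) - (b v^p w^m - a u^m t^p)`, which vanishes by the choice of `T`. -/

theorem div_pow_eq_div_pow_of_mul_sub_eq {K : Type*} [Field K] {p m : ℕ} {a b u v w t T : K}
    (hv : v ≠ 0) (ht : t ≠ 0) (hT0 : T ≠ 0)
    (hT : T * (u ^ (m + 1) * t ^ p - v ^ p * w ^ (m + 1)) = b * v ^ p * w ^ m - a * u ^ m * t ^ p) :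
    (u * T) ^ m * (u * T + a) / (v * T) ^ p = (w * T) ^ m * (w * T + b) / (t * T) ^ p := by
  rw [div_eq_div_iff (pow_ne_zero _ (mul_ne_zero hv hT0)) (pow_ne_zero _ (mul_ne_zero ht hT0))]
  linear_combination (T ^ m * T ^ p) * hT

theorem stmt7_general (p m : ℕ) (a b : ℚ)
    (u v w t : ℚ)
    (hv : v ≠ 0) (ht : t ≠ 0)
    (hden : u ^ (m + 1) * t ^ p - v ^ p * w ^ (m + 1) ≠ 0)
    (T : ℚ)
    (hT : T = (b * v ^ p * w ^ m - a * u ^ m * t ^ p) / (u ^ (m + 1) * t ^ p - v ^ p * w ^ (m + 1)))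
    (hT0 : T ≠ 0)
    (x1 y1 x2 y2 : ℚ)
    (hx1 : x1 = u * T) (hy1 : y1 = v * T) (hx2 : x2 = w * T) (hy2 : y2 = t * T) :
    x1 ^ m * (x1 + a) / y1 ^ p = x2 ^ m * (x2 + b) / y2 ^ p := by
  subst hx1 hy1 hx2 hy2
  exact div_pow_eq_div_pow_of_mul_sub_eq hv ht hT0 (by rw [hT, div_mul_cancel₀ _ hden])

theorem stmt7 (p m : ℕ) (hp0 : 0 < p) (hm0 : 0 < m) (a b : ℚ)
    (ha : a ≠ 0) (hb : b ≠ 0) (u v w t : ℚ)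
    (hv : v ≠ 0) (ht : t ≠ 0)
    (hden : u ^ (m + 1) * t ^ p - v ^ p * w ^ (m + 1) ≠ 0)
    (T : ℚ)
    (hT : T = (b * v ^ p * w ^ m - a * u ^ m * t ^ p) / (u ^ (m + 1) * t ^ p - v ^ p * w ^ (m + 1)))
    (hT0 : T ≠ 0)
    (x1 y1 x2 y2 : ℚ)
    (hx1 : x1 = u * T) (hy1 : y1 = v * T) (hx2 : x2 = w * T) (hy2 : y2 = t * T) :
    x1 ^ m * (x1 + a) / y1 ^ p = x2 ^ m * (x2 + b) / y2 ^ p :=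
  stmt7_general p m a b u v w t hv ht hden T hT hT0 x1 y1 x2 y2 hx1 hy1 hx2 hy2
end

section
/- Let g ≥ 1, q a positive real (or natural) number, and α_1, …, α_{2g} ∈ ℂ. Suppose the polynomial P(T) = Π_{i=1}^{2g} (1 − α_i T) has the functional-equation property P(T) = q^g · T^{2g} · P(1/(qT)) for all T ≠ 0, and that the power sums α_1^k + ⋯ + α_{2g}^k vanish for k = 1, …, g. Then P(1) = 1 + q^g. -/
/-!
Newton's identities turn the vanishing of the first `g` power sums into `e₁ = ⋯ = e_g = 0` for the
elementary symmetric functions `e_k` of the `αᵢ`. By the functional equation the polynomial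
`P = ∑ (-1)ᵏ e_k Tᵏ` equals `q^g ∏ (T - αᵢ / q)`, and comparing coefficients gives
`e_k = q^g q^{-(2g-k)} e_{2g-k}`. Hence `e_k = 0` for `0 < k < 2g` and `e_{2g} = q^g`, so
`P(1) = ∑ (-1)ᵏ e_k = 1 + q^g`.
-/

open Polynomial Finset

namespace Multiset

section CommSemiring

variable {R : Type*} [CommSemiring R]

@[simp]
theorem esymm_zero (s : Multiset R) : s.esymm 0 = 1 := by
  simp [esymm]

theorem esymm_map_ringHom {S : Type*} [CommSemiring S] (f : R →+* S) (s : Multiset R) (n : ℕ) :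
    (s.map f).esymm n = f (s.esymm n) := by
  simp [esymm, powersetCard_map, map_multiset_sum, map_multiset_prod, Multiset.map_map]

end CommSemiring

section CommRing

variable {R : Type*} [CommRing R]

theorem prod_map_one_sub_mul_eq_sum_esymm (s : Multiset R) (t : R) :
    (s.map fun a => 1 - a * t).prod = ∑ j ∈ Finset.range (card s + 1), (-t) ^ j * s.esymm j := by
  calc (s.map fun a => 1 - a * t).prod
      = (((s.map ((-t) • ·)).map fun r => X + C r).prod).eval 1 := by
        simp only [eval_multiset_prod, Multiset.map_map]
        congr 1
        refine Multiset.map_congr rfl fun a _ => ?_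
        simp only [Function.comp_apply, eval_add, eval_X, eval_C, smul_eq_mul]
        ring
    _ = ∑ j ∈ Finset.range (card s + 1), (-t) ^ j * s.esymm j := by
        simp only [prod_X_add_C_eq_sum_esymm, eval_finsetSum, eval_mul, eval_C, eval_pow, eval_X,
          one_pow, mul_one, card_map, ← pow_smul_esymm]
        rfl

theorem coeff_prod_one_sub_C_mul_X (s : Multiset R) {k : ℕ} (hk : k ≤ card s) :
    (s.map fun a => 1 - C a * X).prod.coeff k = (-1) ^ k * s.esymm k := by
  have hexpand := prod_map_one_sub_mul_eq_sum_esymm (s.map C) X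
  simp only [Multiset.map_map, card_map, Function.comp_def, esymm_map_ringHom] at hexpand
  have hterm : ∀ j, (-X : R[X]) ^ j * C (s.esymm j) = C ((-1) ^ j * s.esymm j) * X ^ j := by
    intro j
    rw [neg_pow, C_mul, C_pow, C_neg, C_1]
    ring
  simp only [hexpand, hterm, finsetSum_coeff, coeff_C_mul_X_pow]
  rw [sum_ite_eq, if_pos (Finset.mem_range.mpr (by omega))]

end CommRing

section Field

variable {K : Type*} [Field K] [Infinite K]

theorem prod_map_one_sub_C_mul_X_eq_of_functional_equation (s : Multiset K) (c q : K)
    (hfe : ∀ T : K, T ≠ 0 → (s.map fun a => 1 - a * T).prod =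
      c * T ^ card s * (s.map fun a => 1 - a * (1 / (q * T))).prod) :
    (s.map fun a => 1 - C a * X).prod = C c * (s.map fun a => X - C (q⁻¹ * a)).prod := by
  refine eq_of_infinite_eval_eq _ _ ((Set.finite_singleton 0).infinite_compl.mono fun T hT => ?_)
  have hT : T ≠ 0 := hT
  have hTq : T * (q * T)⁻¹ = q⁻¹ := by rw [mul_inv, mul_left_comm, mul_inv_cancel₀ hT, mul_one]
  have hpow : T ^ card s = (s.map fun _ => T).prod := by simp
  simp only [Set.mem_ofPred_eq, eval_mul, eval_C, eval_multiset_prod, Multiset.map_map,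
    Function.comp_def, eval_sub, eval_one, eval_X, hfe T hT, mul_assoc, hpow, ← prod_map_mul]
  congr 3 with a
  linear_combination (-a) * hTq

theorem esymm_eq_of_functional_equation (s : Multiset K) (q : K) (g : ℕ) (hs : card s = 2 * g)
    (hfe : ∀ T : K, T ≠ 0 → (s.map fun a => 1 - a * T).prod =
      q ^ g * T ^ (2 * g) * (s.map fun a => 1 - a * (1 / (q * T))).prod)
    {k : ℕ} (hk : k ≤ 2 * g) : s.esymm k = q ^ g * q⁻¹ ^ (2 * g - k) * s.esymm (2 * g - k) := by
  have hpoly := prod_map_one_sub_C_mul_X_eq_of_functional_equation s _ q (hs ▸ hfe)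
  have hscale : (s.map (q⁻¹ * ·)).esymm (2 * g - k) = q⁻¹ ^ (2 * g - k) * s.esymm (2 * g - k) :=
    (pow_smul_esymm q⁻¹ _ s).symm
  have hcoeff := congrArg (coeff · k) hpoly
  simp only [coeff_C_mul] at hcoeff
  rw [coeff_prod_one_sub_C_mul_X s (hs ▸ hk), ← Function.comp_def (fun t => X - C t),
    ← Multiset.map_map, prod_X_sub_C_coeff _ (by rwa [card_map, hs]), card_map, hs,
    hscale] at hcoeff
  have hsign : (-1 : K) ^ k * (-1) ^ (2 * g - k) = 1 := by
    rw [← pow_add, Nat.add_sub_cancel' hk, pow_mul]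
    norm_num
  have hsq : ((-1 : K) ^ k) ^ 2 = 1 := by
    rw [← pow_mul, mul_comm, pow_mul]
    norm_num
  linear_combination (-1) ^ k * hcoeff - s.esymm k * hsq +
    q ^ g * q⁻¹ ^ (2 * g - k) * s.esymm (2 * g - k) * hsign

end Field

end Multiset

theorem esymm_eq_zero_of_psum_eq_zero {R σ : Type*} [CommRing R] [NoZeroDivisors R] [CharZero R]
    [Fintype σ] (f : σ → R) {n : ℕ} (hpsum : ∀ k, 1 ≤ k → k ≤ n → ∑ i, f i ^ k = 0)
    {k : ℕ} (hk : 1 ≤ k) (hkn : k ≤ n) : (univ.val.map f).esymm k = 0 := by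
  have hnewton := congrArg (MvPolynomial.aeval f) (MvPolynomial.mul_esymm_eq_sum σ R k)
  simp only [map_mul, map_natCast, map_sum, map_pow, map_neg, map_one,
    MvPolynomial.aeval_esymm_eq_multiset_esymm] at hnewton
  rw [sum_eq_zero, mul_zero] at hnewton
  · exact (mul_eq_zero.mp hnewton).resolve_left (Nat.cast_ne_zero.mpr (by omega))
  · rintro ⟨i, j⟩ hij
    rw [mem_filter, HasAntidiagonal.mem_antidiagonal] at hij
    simp [MvPolynomial.psum, hpsum j (by omega) (by omega)]

theorem stmt10_general (g : ℕ) (hg : 1 ≤ g) (q : ℕ) (α : Fin (2 * g) → ℂ)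
    (hfe : ∀ T : ℂ, T ≠ 0 →
      ∏ i, (1 - α i * T) = (q : ℂ) ^ g * T ^ (2 * g) * ∏ i, (1 - α i * (1 / ((q : ℂ) * T))))
    (ht : ∀ k, 1 ≤ k → k ≤ g → ∑ i, α i ^ k = 0) :
    ∏ i, (1 - α i * 1) = 1 + (q : ℂ) ^ g := by
  set s := univ.val.map α
  have hs : Multiset.card s = 2 * g := by simp [s]
  have hfe' : ∀ T : ℂ, T ≠ 0 → (s.map fun a => 1 - a * T).prod =
      (q : ℂ) ^ g * T ^ (2 * g) * (s.map fun a => 1 - a * (1 / ((q : ℂ) * T))).prod := by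
    simpa only [s, Multiset.map_map, Function.comp_def, prod_map_val] using hfe
  have hlow : ∀ k, 1 ≤ k → k ≤ g → s.esymm k = 0 := fun k => esymm_eq_zero_of_psum_eq_zero α ht
  have hmid : ∀ k, 1 ≤ k → k < 2 * g → s.esymm k = 0 := by
    intro k hk1 hk2
    rcases le_or_gt k g with h | h
    · exact hlow k hk1 h
    · rw [s.esymm_eq_of_functional_equation _ g hs hfe' hk2.le, hlow _ (by omega) (by omega),
        mul_zero]
  have htop : s.esymm (2 * g) = (q : ℂ) ^ g := by
    rw [s.esymm_eq_of_functional_equation _ g hs hfe' le_rfl, Nat.sub_self, pow_zero, mul_one,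
      Multiset.esymm_zero, mul_one]
  calc ∏ i, (1 - α i * 1) = (s.map fun a => 1 - a * 1).prod := by
        simp only [s, Multiset.map_map, Function.comp_def, prod_map_val]
    _ = ∑ j ∈ range (2 * g + 1), (-1) ^ j * s.esymm j := by
        rw [s.prod_map_one_sub_mul_eq_sum_esymm, hs]
    _ = (-1) ^ 0 * s.esymm 0 + (-1) ^ (2 * g) * s.esymm (2 * g) := by
        refine sum_eq_add _ _ (by omega) (fun k hk hk0 => ?_) (by simp) (by simp)
        rw [hmid k (by omega) (by simp at hk; omega), mul_zero]
    _ = 1 + (q : ℂ) ^ g := by simp [htop, pow_mul]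

theorem stmt10 (g : ℕ) (hg : 1 ≤ g) (q : ℕ) (hq : 0 < q) (α : Fin (2 * g) → ℂ)
    (hfe : ∀ T : ℂ, T ≠ 0 →
      ∏ i, (1 - α i * T) = (q : ℂ) ^ g * T ^ (2 * g) * ∏ i, (1 - α i * (1 / ((q : ℂ) * T))))
    (ht : ∀ k, 1 ≤ k → k ≤ g → ∑ i, α i ^ k = 0) :
    ∏ i, (1 - α i * 1) = 1 + (q : ℂ) ^ g :=
  stmt10_general g hg q α hfe ht
end

section
/- Let p be an odd prime and a a nonzero rational. Define F(x, y) = (a − y^p/(a − x)^((p−1)/2), y^(p−2)/(a − x)^((p−3)/2)). If (x, y) satisfies y^p = x·(a − x)^((p−1)/2) with x ≠ a and y ≠ 0, then F(x, y) = (X, Y) satisfies Y^p = X·(a − X)^(p−2). -/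
theorem stmt14 (p : ℕ) (hp : p.Prime) (hodd : Odd p) (a : ℚ) (ha : a ≠ 0)
    (x y : ℚ) (hxa : x ≠ a) (hy : y ≠ 0)
    (hcurve : y ^ p = x * (a - x) ^ ((p - 1) / 2))
    (X Y : ℚ)
    (hX : X = a - y ^ p / (a - x) ^ ((p - 1) / 2))
    (hY : Y = y ^ (p - 2) / (a - x) ^ ((p - 3) / 2)) :
    Y ^ p = X * (a - X) ^ (p - 2) := by
  obtain ⟨k, hk⟩ := hodd
  have hk1 : 1 ≤ k := by
    have := hp.two_le; omega
  have hax : a - x ≠ 0 := sub_ne_zero.mpr (Ne.symm hxa)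
  have haxk : (a - x) ^ ((p - 1) / 2) ≠ 0 := pow_ne_zero _ hax
  have hXx : X = a - x := by
    rw [hX, hcurve, mul_div_assoc, div_self haxk, mul_one]
  have e1 : (p - 1) / 2 = k := by omega
  have e2 : (p - 3) / 2 = k - 1 := by omega
  have e3 : p - 2 = 2 * k - 1 := by omega
  have hexp : k * (2 * k - 1) = (k - 1) * p + 1 := by
    obtain ⟨n, rfl⟩ := Nat.exists_eq_add_of_le hk1
    have h1 : 2 * (1 + n) - 1 = 2 * n + 1 := by omega
    have h2 : 1 + n - 1 = n := by omega
    rw [h1, h2, hk]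
    ring
  rw [e1] at hcurve
  rw [hXx, hY, e2, e3, sub_sub_cancel]
  have key : (y ^ p) ^ (2 * k - 1) = x ^ (2 * k - 1) * ((a - x) ^ ((k - 1) * p) * (a - x)) := by
    rw [hcurve, mul_pow, ← pow_mul, hexp, pow_succ]
  rw [div_pow, ← pow_mul, mul_comm (2 * k - 1) p, pow_mul, key, ← pow_mul,
    mul_comm (k - 1) p, pow_mul]
  field_simp
end

section
/- Let p be an odd prime and a a nonzero rational. Define G(x, y) = (a − y^p/(a − x)^(p−2), y^((p−1)/2)/(a − x)^((p−3)/2)). If (x, y) satisfies y^p = x·(a − x)^(p−2) with x ≠ a and y ≠ 0, then G(x, y) = (X, Y) satisfies Y^p = X·(a − X)^((p−1)/2). Moreover, G is inverse to the map F(x, y) = (a − y^p/(a − x)^((p−1)/2), y^(p−2)/(a − x)^((p−3)/2)) on points with x ≠ a, y ≠ 0. -/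
/-!
Write `p = 2n + 3`. On the curve `y^p = x (a - x)^(2n+1)` the first coordinate of `G` is
`a - x`, so `G` swaps the roles of `x` and `a - x`. For `Y = y^(n+1) / (a - x)^n`, raising the
curve equation to the `(n+1)`-th resp. `n`-th power and using
`(2n+1)(n+1) = n(2n+3) + 1` and `(n+1)(2n+1) = n(2n+3) + 1` gives
`Y^(2n+3) = x^(n+1) (a - x)` and `Y^(2n+1) = x^n y`,
which are the curve equation for `(X, Y)` and the inverse formula for the second coordinate.
-/

namespace SuperellipticCurve

variable {K : Type*} [Field K] {n : ℕ} {a x y : K}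

theorem pow_div_eq (hxa : a - x ≠ 0) (hcurve : y ^ (2 * n + 3) = x * (a - x) ^ (2 * n + 1)) :
    y ^ (2 * n + 3) / (a - x) ^ (2 * n + 1) = x := by
  rw [hcurve]
  field_simp

theorem pow_two_mul_add_three (hxa : a - x ≠ 0)
    (hcurve : y ^ (2 * n + 3) = x * (a - x) ^ (2 * n + 1)) :
    (y ^ (n + 1) / (a - x) ^ n) ^ (2 * n + 3) = x ^ (n + 1) * (a - x) := by
  have hpow : y ^ ((n + 1) * (2 * n + 3)) = x ^ (n + 1) * (a - x) ^ (n * (2 * n + 3)) * (a - x) := by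
    rw [mul_comm (n + 1), pow_mul, hcurve, mul_pow, ← pow_mul,
      show (2 * n + 1) * (n + 1) = n * (2 * n + 3) + 1 by ring]
    ring
  rw [div_pow, ← pow_mul, ← pow_mul, hpow]
  field_simp

theorem pow_two_mul_add_one (hxa : a - x ≠ 0)
    (hcurve : y ^ (2 * n + 3) = x * (a - x) ^ (2 * n + 1)) :
    (y ^ (n + 1) / (a - x) ^ n) ^ (2 * n + 1) = x ^ n * y := by
  have hpow : y ^ ((n + 1) * (2 * n + 1)) = x ^ n * (a - x) ^ (n * (2 * n + 1)) * y := by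
    rw [show (n + 1) * (2 * n + 1) = (2 * n + 3) * n + 1 by ring, pow_succ, pow_mul, hcurve,
      mul_pow, ← pow_mul, mul_comm (2 * n + 1)]
  rw [div_pow, ← pow_mul, ← pow_mul, hpow]
  field_simp

end SuperellipticCurve

theorem stmt15_general (p : ℕ) (hp : p.Prime) (hodd : Odd p) (a : ℚ)
    (x y : ℚ) (hxa : x ≠ a) (hy : y ≠ 0)
    (hcurve : y ^ p = x * (a - x) ^ (p - 2))
    (X Y : ℚ)
    (hX : X = a - y ^ p / (a - x) ^ (p - 2))
    (hY : Y = y ^ ((p - 1) / 2) / (a - x) ^ ((p - 3) / 2)) :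
    Y ^ p = X * (a - X) ^ ((p - 1) / 2) ∧
    a - Y ^ p / (a - X) ^ ((p - 1) / 2) = x ∧
    Y ^ (p - 2) / (a - X) ^ ((p - 3) / 2) = y := by
  obtain ⟨n, rfl⟩ : ∃ n, p = 2 * n + 3 := by
    obtain ⟨m, rfl⟩ := hodd
    exact ⟨m - 1, by have := hp.two_le; omega⟩
  simp only [show (2 * n + 3 - 1) / 2 = n + 1 by omega, show (2 * n + 3 - 3) / 2 = n by omega,
    show 2 * n + 3 - 2 = 2 * n + 1 by omega] at hcurve hX hY ⊢
  have hax : a - x ≠ 0 := sub_ne_zero.mpr hxa.symm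
  have hx : x ≠ 0 := by
    rintro rfl
    exact hy (by simpa using hcurve)
  have hXx : X = a - x := by rw [hX, SuperellipticCurve.pow_div_eq hax hcurve]
  have haX : a - X = x := by rw [hXx]; ring
  have hYp : Y ^ (2 * n + 3) = X * (a - X) ^ (n + 1) := by
    rw [hY, SuperellipticCurve.pow_two_mul_add_three hax hcurve, haX, hXx]
    ring
  refine ⟨hYp, ?_, ?_⟩
  · rw [hYp, haX, mul_div_cancel_right₀ _ (pow_ne_zero _ hx), hXx]
    ring
  · rw [haX, hY, SuperellipticCurve.pow_two_mul_add_one hax hcurve,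
      mul_div_cancel_left₀ _ (pow_ne_zero _ hx)]

theorem stmt15 (p : ℕ) (hp : p.Prime) (hodd : Odd p) (a : ℚ) (ha : a ≠ 0)
    (x y : ℚ) (hxa : x ≠ a) (hy : y ≠ 0)
    (hcurve : y ^ p = x * (a - x) ^ (p - 2))
    (X Y : ℚ)
    (hX : X = a - y ^ p / (a - x) ^ (p - 2))
    (hY : Y = y ^ ((p - 1) / 2) / (a - x) ^ ((p - 3) / 2)) :
    Y ^ p = X * (a - X) ^ ((p - 1) / 2) ∧
    a - Y ^ p / (a - X) ^ ((p - 1) / 2) = x ∧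
    Y ^ (p - 2) / (a - X) ^ ((p - 3) / 2) = y :=
  stmt15_general p hp hodd a x y hxa hy hcurve X Y hX hY
end
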